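/- arXiv:2105.04396 — 2 statements merged into one kernel-verified Lean document; each statement's English description precedes it below -/
import Mathlib

section
/- Let r13, r23, r33, M, Mz, Mx, My be real numbers with r33 ≠ 0, M > 0 and Mz > 0. Define G1(φ, θ) = (r13·cos φ + r23·sin φ·sin θ − r33·sin φ·cos θ)/(r13·sin φ − r23·cos φ·sin θ + r33·cos θ·cos φ), G2(φ, θ) = (r23·cos θ + r33·sin θ)/(r13·sin φ − r23·cos φ·sin θ + r33·cos θ·cos φ), x_zmp(φ, θ) = Mx/M − (Mz/M)·G1(φ, θ) and y_zmp(φ, θ) = My/M − (Mz/M)·G2(φ, θ). Then the partial derivative of x_zmp with respect to the roll angle φ at (0, 0) equals (Mz/M)·(1 + r13²/r33²), which is at least Mz/M > 0, and the partial derivative of y_zmp with respect to the pitch angle θ at (0, 0) equals −(Mz/M)·(1 + r23²/r33²), which is at most −Mz/M < 0. -/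
/-! With the other angle at zero, the roll quotient `q(φ) = (a cos φ - b sin φ) / (a sin φ + b cos φ)`
has numerator and denominator that differentiate into each other (`N' = -D`, `D' = N`), so
`q' = -(1 + q²)`; the pitch quotient is `q(-θ)`. At zero `q = a / b` with `b = r33`, which gives
the sensitivities `±(Mz / M)(1 + a² / r33²)`, of modulus at least `Mz / M`. -/

open Real

theorem hasDerivAt_cos_sub_sin_div_sin_add_cos (a b x : ℝ) (hx : a * sin x + b * cos x ≠ 0) :
    HasDerivAt (fun φ => (a * cos φ - b * sin φ) / (a * sin φ + b * cos φ))
      (-(1 + ((a * cos x - b * sin x) / (a * sin x + b * cos x)) ^ 2)) x := by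
  have hnum : HasDerivAt (fun φ => a * cos φ - b * sin φ) (-(a * sin x + b * cos x)) x :=
    (((hasDerivAt_cos x).const_mul a).sub ((hasDerivAt_sin x).const_mul b)).congr_deriv (by ring)
  have hden : HasDerivAt (fun φ => a * sin φ + b * cos φ) (a * cos x - b * sin x) x :=
    (((hasDerivAt_sin x).const_mul a).add ((hasDerivAt_cos x).const_mul b)).congr_deriv (by ring)
  refine (hnum.div hden hx).congr_deriv ?_
  field_simp
  ring

theorem hasDerivAt_cos_sub_sin_div_sin_add_cos_zero (a b : ℝ) (hb : b ≠ 0) :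
    HasDerivAt (fun φ => (a * cos φ - b * sin φ) / (a * sin φ + b * cos φ))
      (-(1 + a ^ 2 / b ^ 2)) 0 := by
  convert hasDerivAt_cos_sub_sin_div_sin_add_cos a b 0 (by simpa using hb) using 1
  simp [div_pow]

theorem hasDerivAt_cos_add_sin_div_cos_sub_sin_zero (a b : ℝ) (hb : b ≠ 0) :
    HasDerivAt (fun θ => (a * cos θ + b * sin θ) / (b * cos θ - a * sin θ))
      (1 + a ^ 2 / b ^ 2) 0 := by
  have hreflect : (fun θ => (a * cos θ + b * sin θ) / (b * cos θ - a * sin θ)) =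
      fun θ => (a * cos (-θ) - b * sin (-θ)) / (a * sin (-θ) + b * cos (-θ)) := by
    funext θ
    rw [cos_neg, sin_neg]
    ring
  rw [hreflect]
  exact ((hasDerivAt_cos_sub_sin_div_sin_add_cos_zero a b hb).comp_of_eq 0
    (hasDerivAt_neg 0) neg_zero.symm).congr_deriv (by ring)

/-- Proposition 2 proof (monotonicity bounds, eq. (zmp_mono)): the sensitivity of the
perturbed quasi-static ZMP coordinates to the roll and pitch perturbation angles at
zero perturbation. -/
theorem zmp_mono_bounds
    (r13 r23 r33 M Mz Mx My : ℝ) (hr33 : r33 ≠ 0) (hM : 0 < M) (hMz : 0 < Mz)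
    (G1 G2 : ℝ → ℝ → ℝ) (xzmp yzmp : ℝ → ℝ → ℝ)
    (hG1 : ∀ φ θ, G1 φ θ =
      (r13 * Real.cos φ + r23 * Real.sin φ * Real.sin θ - r33 * Real.sin φ * Real.cos θ) /
      (r13 * Real.sin φ - r23 * Real.cos φ * Real.sin θ + r33 * Real.cos θ * Real.cos φ))
    (hG2 : ∀ φ θ, G2 φ θ =
      (r23 * Real.cos θ + r33 * Real.sin θ) /
      (r13 * Real.sin φ - r23 * Real.cos φ * Real.sin θ + r33 * Real.cos θ * Real.cos φ))
    (hx : ∀ φ θ, xzmp φ θ = Mx / M - (Mz / M) * G1 φ θ)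
    (hy : ∀ φ θ, yzmp φ θ = My / M - (Mz / M) * G2 φ θ) :
    (deriv (fun φ => xzmp φ 0) 0 = (Mz / M) * (1 + r13 ^ 2 / r33 ^ 2) ∧
      Mz / M ≤ deriv (fun φ => xzmp φ 0) 0 ∧ 0 < Mz / M) ∧
    (deriv (fun θ => yzmp 0 θ) 0 = -((Mz / M) * (1 + r23 ^ 2 / r33 ^ 2)) ∧
      deriv (fun θ => yzmp 0 θ) 0 ≤ -(Mz / M) ∧ -(Mz / M) < 0) := by
  have hMzM : 0 < Mz / M := div_pos hMz hM
  have hroll : deriv (fun φ => xzmp φ 0) 0 = (Mz / M) * (1 + r13 ^ 2 / r33 ^ 2) := by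
    have hfun : (fun φ => xzmp φ 0) = fun φ => Mx / M - (Mz / M) *
        ((r13 * cos φ - r33 * sin φ) / (r13 * sin φ + r33 * cos φ)) := by
      funext φ
      simp only [hx, hG1, sin_zero, cos_zero, mul_zero, mul_one, add_zero, sub_zero]
    rw [hfun, (((hasDerivAt_cos_sub_sin_div_sin_add_cos_zero r13 r33 hr33).const_mul
      (Mz / M)).const_sub (Mx / M)).deriv]
    ring
  have hpitch : deriv (fun θ => yzmp 0 θ) 0 = -((Mz / M) * (1 + r23 ^ 2 / r33 ^ 2)) := by
    have hfun : (fun θ => yzmp 0 θ) = fun θ => My / M - (Mz / M) *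
        ((r23 * cos θ + r33 * sin θ) / (r33 * cos θ - r23 * sin θ)) := by
      funext θ
      simp only [hy, hG2, sin_zero, cos_zero, mul_zero, mul_one, zero_sub]
      ring_nf
    rw [hfun, (((hasDerivAt_cos_add_sin_div_cos_sub_sin_zero r23 r33 hr33).const_mul
      (Mz / M)).const_sub (My / M)).deriv]
  have hgain (r : ℝ) : Mz / M ≤ (Mz / M) * (1 + r ^ 2 / r33 ^ 2) :=
    le_mul_of_one_le_right hMzM.le (le_add_of_nonneg_right (by positivity))
  refine ⟨⟨hroll, hroll ▸ hgain r13, hMzM⟩, ⟨hpitch, ?_, neg_neg_of_pos hMzM⟩⟩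
  rw [hpitch]
  exact neg_le_neg (hgain r23)
end

section
/- Let n ≥ 1, let m₁, …, mₙ be positive reals with M = Σᵢ mᵢ, let x₁, …, xₙ, y₁, …, yₙ, z₁, …, zₙ be reals, let g_z ≠ 0, and let ψ, w, a ∈ ℝ. Define for each i: ẍᵢ = (−cos ψ·w² − sin ψ·a)·xᵢ + (sin ψ·w² − cos ψ·a)·yᵢ and ÿᵢ = (−sin ψ·w² + cos ψ·a)·xᵢ + (−cos ψ·w² − sin ψ·a)·yᵢ, and set Δx = Σᵢ mᵢ ẍᵢ zᵢ / (M·g_z) and Δy = Σᵢ mᵢ ÿᵢ zᵢ / (M·g_z). Then √(Δx² + Δy²) ≤ 2·√(Σᵢ (mᵢ zᵢ/(M·g_z))²) · Σᵢ (|xᵢ|·w² + |xᵢ|·|a| + |yᵢ|·w² + |yᵢ|·|a|). -/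
open Finset in
/-- Theorem 1 proof, turning bound (turn_bound): during a skid-steered yaw turn with
yaw angle ψ, yaw rate w, and yaw angular acceleration a, the distance between the
dynamic and quasi-static ZMP is bounded by a quantity proportional to w² and |a|. -/
theorem zmp_turn_bound
    (n : ℕ) (hn : 1 ≤ n) (m x y z : Fin n → ℝ) (hm : ∀ i, 0 < m i)
    (M : ℝ) (hM : M = ∑ i, m i)
    (gz : ℝ) (hgz : gz ≠ 0) (ψ w a : ℝ)
    (xdd ydd : Fin n → ℝ)
    (hxdd : ∀ i, xdd i = (-Real.cos ψ * w ^ 2 - Real.sin ψ * a) * x i +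
              (Real.sin ψ * w ^ 2 - Real.cos ψ * a) * y i)
    (hydd : ∀ i, ydd i = (-Real.sin ψ * w ^ 2 + Real.cos ψ * a) * x i +
              (-Real.cos ψ * w ^ 2 - Real.sin ψ * a) * y i)
    (Δx Δy : ℝ)
    (hΔx : Δx = (∑ i, m i * xdd i * z i) / (M * gz))
    (hΔy : Δy = (∑ i, m i * ydd i * z i) / (M * gz)) :
    Real.sqrt (Δx ^ 2 + Δy ^ 2) ≤
      2 * Real.sqrt (∑ i, (m i * z i / (M * gz)) ^ 2) *
        ∑ i, (|x i| * w ^ 2 + |x i| * |a| + |y i| * w ^ 2 + |y i| * |a|) := by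
  set c : Fin n → ℝ := fun i => m i * z i / (M * gz) with hc
  set b : Fin n → ℝ := fun i => |x i| * w ^ 2 + |x i| * |a| + |y i| * w ^ 2 + |y i| * |a|
    with hb
  have hb0 : ∀ i, 0 ≤ b i := fun i => by
    have := abs_nonneg (x i); have := abs_nonneg (y i); have := abs_nonneg a
    have := sq_nonneg w; positivity
  have hS : (0:ℝ) ≤ Real.sqrt (∑ i, c i ^ 2) := Real.sqrt_nonneg _
  have hcle : ∀ i, |c i| ≤ Real.sqrt (∑ j, c j ^ 2) := by
    intro i
    rw [← Real.sqrt_sq_eq_abs]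
    exact Real.sqrt_le_sqrt (Finset.single_le_sum (fun j _ => sq_nonneg (c j)) (mem_univ i))
  have hcos := Real.abs_cos_le_one ψ
  have hsin := Real.abs_sin_le_one ψ
  have key : ∀ (f : Fin n → ℝ), (∀ i, |f i| ≤ b i) →
      |∑ i, c i * f i| ≤ Real.sqrt (∑ j, c j ^ 2) * ∑ i, b i := by
    intro f hf
    calc |∑ i, c i * f i| ≤ ∑ i, |c i * f i| := Finset.abs_sum_le_sum_abs _ _
      _ ≤ ∑ i, Real.sqrt (∑ j, c j ^ 2) * b i := by
          apply Finset.sum_le_sum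
          intro i _
          rw [abs_mul]
          exact mul_le_mul (hcle i) (hf i) (abs_nonneg _) hS
      _ = Real.sqrt (∑ j, c j ^ 2) * ∑ i, b i := by rw [← Finset.mul_sum]
  have hxb : ∀ i, |xdd i| ≤ b i := by
    intro i
    rw [hxdd i]
    have h1 : |(-Real.cos ψ * w ^ 2 - Real.sin ψ * a) * x i| ≤ |x i| * w ^ 2 + |x i| * |a| := by
      rw [abs_mul]
      have : |(-Real.cos ψ * w ^ 2 - Real.sin ψ * a)| ≤ w ^ 2 + |a| := by
        calc |(-Real.cos ψ * w ^ 2 - Real.sin ψ * a)|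
            ≤ |(-Real.cos ψ * w ^ 2)| + |Real.sin ψ * a| := abs_sub _ _
          _ ≤ w ^ 2 + |a| := by
              rw [abs_mul, abs_mul, abs_neg, abs_pow]
              nlinarith [abs_nonneg a, sq_nonneg w, sq_abs w, abs_nonneg (Real.cos ψ),
                abs_nonneg (Real.sin ψ)]
      nlinarith [abs_nonneg (x i), abs_nonneg (-Real.cos ψ * w ^ 2 - Real.sin ψ * a)]
    have h2 : |(Real.sin ψ * w ^ 2 - Real.cos ψ * a) * y i| ≤ |y i| * w ^ 2 + |y i| * |a| := by
      rw [abs_mul]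
      have : |(Real.sin ψ * w ^ 2 - Real.cos ψ * a)| ≤ w ^ 2 + |a| := by
        calc |(Real.sin ψ * w ^ 2 - Real.cos ψ * a)|
            ≤ |Real.sin ψ * w ^ 2| + |Real.cos ψ * a| := abs_sub _ _
          _ ≤ w ^ 2 + |a| := by
              rw [abs_mul, abs_mul, abs_pow]
              nlinarith [abs_nonneg a, sq_nonneg w, sq_abs w, abs_nonneg (Real.cos ψ),
                abs_nonneg (Real.sin ψ)]
      nlinarith [abs_nonneg (y i), abs_nonneg (Real.sin ψ * w ^ 2 - Real.cos ψ * a)]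
    calc |_ + _| ≤ _ := abs_add_le _ _
      _ ≤ b i := by simp only [hb]; linarith
  have hyb : ∀ i, |ydd i| ≤ b i := by
    intro i
    rw [hydd i]
    have h1 : |(-Real.sin ψ * w ^ 2 + Real.cos ψ * a) * x i| ≤ |x i| * w ^ 2 + |x i| * |a| := by
      rw [abs_mul]
      have : |(-Real.sin ψ * w ^ 2 + Real.cos ψ * a)| ≤ w ^ 2 + |a| := by
        calc |(-Real.sin ψ * w ^ 2 + Real.cos ψ * a)|
            ≤ |(-Real.sin ψ * w ^ 2)| + |Real.cos ψ * a| := abs_add_le _ _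
          _ ≤ w ^ 2 + |a| := by
              rw [abs_mul, abs_mul, abs_neg, abs_pow]
              nlinarith [abs_nonneg a, sq_nonneg w, sq_abs w, abs_nonneg (Real.cos ψ),
                abs_nonneg (Real.sin ψ)]
      nlinarith [abs_nonneg (x i), abs_nonneg (-Real.sin ψ * w ^ 2 + Real.cos ψ * a)]
    have h2 : |(-Real.cos ψ * w ^ 2 - Real.sin ψ * a) * y i| ≤ |y i| * w ^ 2 + |y i| * |a| := by
      rw [abs_mul]
      have : |(-Real.cos ψ * w ^ 2 - Real.sin ψ * a)| ≤ w ^ 2 + |a| := by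
        calc |(-Real.cos ψ * w ^ 2 - Real.sin ψ * a)|
            ≤ |(-Real.cos ψ * w ^ 2)| + |Real.sin ψ * a| := abs_sub _ _
          _ ≤ w ^ 2 + |a| := by
              rw [abs_mul, abs_mul, abs_neg, abs_pow]
              nlinarith [abs_nonneg a, sq_nonneg w, sq_abs w, abs_nonneg (Real.cos ψ),
                abs_nonneg (Real.sin ψ)]
      nlinarith [abs_nonneg (y i), abs_nonneg (-Real.cos ψ * w ^ 2 - Real.sin ψ * a)]
    calc |_ + _| ≤ _ := abs_add_le _ _
      _ ≤ b i := by simp only [hb]; linarith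
  have hΔx' : Δx = ∑ i, c i * xdd i := by
    rw [hΔx, Finset.sum_div]
    exact Finset.sum_congr rfl fun i _ => by simp only [hc]; ring
  have hΔy' : Δy = ∑ i, c i * ydd i := by
    rw [hΔy, Finset.sum_div]
    exact Finset.sum_congr rfl fun i _ => by simp only [hc]; ring
  have hX : |Δx| ≤ Real.sqrt (∑ j, c j ^ 2) * ∑ i, b i := hΔx' ▸ key _ hxb
  have hY : |Δy| ≤ Real.sqrt (∑ j, c j ^ 2) * ∑ i, b i := hΔy' ▸ key _ hyb
  have habs : Real.sqrt (Δx ^ 2 + Δy ^ 2) ≤ |Δx| + |Δy| := by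
    rw [show Δx ^ 2 + Δy ^ 2 = |Δx| ^ 2 + |Δy| ^ 2 by rw [sq_abs, sq_abs]]
    have h : |Δx| ^ 2 + |Δy| ^ 2 ≤ (|Δx| + |Δy|) ^ 2 := by
      nlinarith [abs_nonneg Δx, abs_nonneg Δy]
    calc Real.sqrt (|Δx| ^ 2 + |Δy| ^ 2) ≤ Real.sqrt ((|Δx| + |Δy|) ^ 2) :=
          Real.sqrt_le_sqrt h
      _ = |Δx| + |Δy| := Real.sqrt_sq (by positivity)
  calc Real.sqrt (Δx ^ 2 + Δy ^ 2) ≤ |Δx| + |Δy| := habs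
    _ ≤ 2 * Real.sqrt (∑ j, c j ^ 2) * ∑ i, b i := by linarith
    _ = 2 * Real.sqrt (∑ i, (m i * z i / (M * gz)) ^ 2) *
        ∑ i, (|x i| * w ^ 2 + |x i| * |a| + |y i| * w ^ 2 + |y i| * |a|) := rfl
end
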